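/- arXiv:2309.09457 — 4 statements merged into one kernel-verified Lean document; each statement's English description precedes it below -/
import Mathlib

section
/- There is a universal constant C₀ > 0 such that the following holds. Fix d ∈ ℕ, a finite action set 𝒜 with |𝒜| = A ≥ 1, a measurable space 𝒳, a probability distribution ν on 𝒳, a feature map φ : 𝒳 × 𝒜 → ℝ^d with each φ(·,a) measurable and ‖φ(x,a)‖_∞ ≤ 1 for all (x,a), and an unknown vector θ* ∈ ℝ^d with ‖θ*‖₁ ≤ C for some C ≥ 1. Let ε, δ ∈ (0,1) and let N ≥ C₀ · C⁴ A² ε⁻⁴ log(d/δ). Draw i.i.d. samples (x^i, a^i) for i = 1,…,N with x^i ∼ ν and a^i ∼ Unif(𝒜) independent of x^i, and observe noiseless rewards r^i = ⟨φ(x^i,a^i), θ*⟩. Let θ̂ be any minimizer of Σ_{i=1}^N (⟨φ(x^i,a^i), θ⟩ − r^i)² over {θ ∈ ℝ^d : ‖θ‖₁ ≤ C}, and let π̂ : 𝒳 → 𝒜 be any measurable function with π̂(x) ∈ argmax_{a∈𝒜} ⟨φ(x,a), θ̂⟩ for every x. Then with probability at least 1 − δ over the samples, E_{x∼ν}[ max_{a∈𝒜}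 ⟨φ(x,a), θ*⟩ − ⟨φ(x,π̂(x)), θ*⟩ ] ≤ ε. -/
/-!
The rewards are noiseless, so `θ*` has zero empirical loss and the least-squares estimate `θ̂` fits
every sample exactly: `⟨φ(xʲ, aʲ), Δ⟩ = 0` for `Δ = θ̂ - θ*`. The population error
`E⟨φ, Δ⟩² = Σₖₗ Δₖ Δₗ Mₖₗ` (with `M` the population Gram matrix) is then at most
`‖Δ‖₁² max |M - M̂| ≤ 4C² max |M - M̂|`, and Hoeffding's inequality with a union bound over the
`d²` entries of the empirical Gram matrix `M̂` makes `max |M - M̂| ≤ t = ε² / (16 A C²)` with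
probability `1 - δ`. Against any action `a`, the greedy policy for `θ̂` loses at most
`|⟨φ(x, π̂ x), Δ⟩| + |⟨φ(x, a), Δ⟩|`, which by AM-GM is at most `Σₐ ⟨φ(x, a), Δ⟩² / η + η`;
averaging over `x` (uniform actions contribute the factor `A`) with `η = ε / 2` gives
suboptimality at most `ε`.
-/

open MeasureTheory ProbabilityTheory

noncomputable section

def l1norm {d : ℕ} (v : Fin d → ℝ) : ℝ := ∑ i, |v i|

def ip {d : ℕ} (u v : Fin d → ℝ) : ℝ := ∑ i, u i * v i

section Vectors

variable {d : ℕ}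

lemma l1norm_nonneg (v : Fin d → ℝ) : 0 ≤ l1norm v :=
  Finset.sum_nonneg fun i _ => abs_nonneg (v i)

lemma l1norm_sub_le (a b : Fin d → ℝ) : l1norm (a - b) ≤ l1norm a + l1norm b := by
  rw [l1norm, l1norm, l1norm, ← Finset.sum_add_distrib]
  exact Finset.sum_le_sum fun i _ => abs_sub (a i) (b i)

lemma ip_sub_right (u a b : Fin d → ℝ) : ip u (a - b) = ip u a - ip u b := by
  simp only [ip, Pi.sub_apply, mul_sub, Finset.sum_sub_distrib]

lemma abs_ip_le_l1norm {u : Fin d → ℝ} (hu : ∀ i, |u i| ≤ 1) (v : Fin d → ℝ) :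
    |ip u v| ≤ l1norm v := by
  refine (Finset.abs_sum_le_sum_abs _ _).trans (Finset.sum_le_sum fun i _ => ?_)
  rw [abs_mul]
  exact mul_le_of_le_one_left (abs_nonneg _) (hu i)

lemma sq_ip (u v : Fin d → ℝ) : ip u v ^ 2 = ∑ k, ∑ l, v k * v l * (u k * u l) := by
  rw [ip, sq, Finset.sum_mul_sum]
  exact Finset.sum_congr rfl fun k _ => Finset.sum_congr rfl fun l _ => by ring

lemma measurable_ip {Ω : Type*} [MeasurableSpace Ω] {φ : Ω → Fin d → ℝ} (hφ : Measurable φ)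
    (v : Fin d → ℝ) : Measurable fun p => ip (φ p) v :=
  Finset.measurable_sum _ fun i _ => (measurable_pi_apply i |>.comp hφ).mul_const _

lemma integrable_sq_ip {Ω : Type*} [MeasurableSpace Ω] {μ : Measure Ω} [IsFiniteMeasure μ]
    {φ : Ω → Fin d → ℝ} (hφm : Measurable φ) (hφ : ∀ p i, |φ p i| ≤ 1) (v : Fin d → ℝ) :
    Integrable (fun p => ip (φ p) v ^ 2) μ :=
  .of_bound ((measurable_ip hφm v).pow_const 2).aestronglyMeasurable (l1norm v ^ 2)
    (ae_of_all _ fun p => by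
      rw [Real.norm_eq_abs, abs_pow]
      exact pow_le_pow_left₀ (abs_nonneg _) (abs_ip_le_l1norm (hφ p) v) 2)

end Vectors

section Hoeffding

variable {Ω : Type*} [MeasurableSpace Ω] (μ : Measure Ω) [IsProbabilityMeasure μ]

lemma measureReal_sum_integral_sub_ge_le {f : Ω → ℝ} (hf : Measurable f)
    (hf_mem : ∀ p, f p ∈ Set.Icc (-1) 1) (N : ℕ) {t : ℝ} (ht : 0 ≤ t) :
    (Measure.pi fun _ : Fin N => μ).real {ω | N * t ≤ ∑ j, (μ[f] - f (ω j))} ≤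
      Real.exp (-(N * t ^ 2) / 2) := by
  have hsubG : HasSubgaussianMGF (fun p => μ[f] - f p) 1 μ := by
    convert (hasSubgaussianMGF_of_mem_Icc hf.aemeasurable (ae_of_all μ hf_mem)).neg using 1
    · ext p; simp
    · ext; norm_num
  have hsample : ∀ j : Fin N,
      HasSubgaussianMGF (fun ω : Fin N → Ω => μ[f] - f (ω j)) 1 (Measure.pi fun _ => μ) :=
    fun j => HasSubgaussianMGF.of_map (X := fun p => μ[f] - f p)
      (measurable_pi_apply j).aemeasurable
      (by rwa [(measurePreserving_eval (fun _ => μ) j).map_eq])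
  have hindep : iIndepFun (fun (j : Fin N) (ω : Fin N → Ω) => μ[f] - f (ω j))
      (Measure.pi fun _ => μ) :=
    iIndepFun_pi (X := fun _ p => μ[f] - f p) fun _ => (hf.const_sub _).aemeasurable
  convert HasSubgaussianMGF.measure_sum_ge_le_of_iIndepFun hindep (fun j _ => hsample j)
    (ε := N * t) (by positivity) using 2
  simp only [Finset.sum_const, Finset.card_univ, Fintype.card_fin, nsmul_eq_mul, mul_one,
    NNReal.coe_natCast]
  rcases eq_or_ne (N : ℝ) 0 with hN | hN
  · simp [hN]
  · field_simp

end Hoeffding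

section Gram

variable {d : ℕ}

/- Only one tail of each Gram-entry deviation is controlled: the lower one on the diagonal, where
`Δₖ² ≥ 0`, and opposite tails for `(k, l)` and `(l, k)`. This keeps the union bound at `d²` events,
which is what lets it succeed for `d = 1` and `δ` close to `1`. -/
def gramSign (k l : Fin d) : ℝ := if k ≤ l then 1 else -1

lemma sum_mul_mul_le_of_gramSign_mul_le (x : Fin d → ℝ) {D : Fin d → Fin d → ℝ}
    (hD : ∀ k l, D k l = D l k) {T : ℝ} (hT : ∀ k l, gramSign k l * D k l ≤ T) :
    ∑ k, ∑ l, x k * x l * D k l ≤ l1norm x ^ 2 * T := by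
  have hterm : ∀ k l, x k * x l * D k l ≤ |x k| * |x l| * T := by
    intro k l
    rcases eq_or_ne k l with rfl | hkl
    · have := hT k k
      simp only [gramSign, le_refl, if_true, one_mul] at this
      rw [← abs_mul, abs_mul_self]
      exact mul_le_mul_of_nonneg_left this (mul_self_nonneg _)
    · have habs : |D k l| ≤ T := by
        have h1 := hT k l
        have h2 := hT l k
        rw [hD l k] at h2
        rcases lt_or_gt_of_ne hkl with h | h <;>
          simp only [gramSign, h.le, h.not_ge, if_true, if_false] at h1 h2 <;>
          exact abs_le.mpr ⟨by linarith, by linarith⟩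
      calc x k * x l * D k l ≤ |x k * x l * D k l| := le_abs_self _
        _ = |x k| * |x l| * |D k l| := by rw [abs_mul, abs_mul]
        _ ≤ |x k| * |x l| * T := by gcongr
  calc ∑ k, ∑ l, x k * x l * D k l ≤ ∑ k, ∑ l, |x k| * |x l| * T :=
        Finset.sum_le_sum fun k _ => Finset.sum_le_sum fun l _ => hterm k l
    _ = l1norm x ^ 2 * T := by
        rw [l1norm, sq, Finset.sum_mul_sum, Finset.sum_mul]
        simp only [Finset.sum_mul]

variable {Ω : Type*}

def signedGram (φ : Ω → Fin d → ℝ) (k l : Fin d) (p : Ω) : ℝ := gramSign k l * (φ p k * φ p l)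

lemma signedGram_mem_Icc {φ : Ω → Fin d → ℝ} (hφ : ∀ p i, |φ p i| ≤ 1) (k l : Fin d) (p : Ω) :
    signedGram φ k l p ∈ Set.Icc (-1) 1 := by
  have hsign : |gramSign k l| = 1 := by unfold gramSign; split_ifs <;> simp
  rw [Set.mem_Icc, ← abs_le, signedGram, abs_mul, hsign, one_mul, abs_mul]
  exact mul_le_one₀ (hφ p k) (abs_nonneg _) (hφ p l)

variable [MeasurableSpace Ω]

lemma measurable_signedGram {φ : Ω → Fin d → ℝ} (hφ : Measurable φ) (k l : Fin d) :
    Measurable (signedGram φ k l) :=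
  ((measurable_pi_apply k |>.comp hφ).mul (measurable_pi_apply l |>.comp hφ)).const_mul _

lemma integral_sq_ip (μ : Measure Ω) [IsFiniteMeasure μ] {φ : Ω → Fin d → ℝ}
    (hφm : Measurable φ) (hφ : ∀ p i, |φ p i| ≤ 1) (v : Fin d → ℝ) :
    ∫ p, ip (φ p) v ^ 2 ∂μ = ∑ k, ∑ l, v k * v l * ∫ p, φ p k * φ p l ∂μ := by
  have hint : ∀ k l, Integrable (fun p => φ p k * φ p l) μ := fun k l =>
    .of_bound ((measurable_pi_apply k |>.comp hφm).mul
      (measurable_pi_apply l |>.comp hφm)).aestronglyMeasurable 1 (ae_of_all _ fun p => by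
        rw [Real.norm_eq_abs, abs_mul]; exact mul_le_one₀ (hφ p k) (abs_nonneg _) (hφ p l))
  simp_rw [sq_ip]
  rw [integral_finsetSum _ fun k _ => integrable_finsetSum _ fun l _ => (hint k l).const_mul _]
  refine Finset.sum_congr rfl fun k _ => ?_
  rw [integral_finsetSum _ fun l _ => (hint k l).const_mul _]
  simp_rw [integral_const_mul]

lemma integral_sq_ip_le_of_signedGram_deviation (μ : Measure Ω) [IsFiniteMeasure μ]
    {φ : Ω → Fin d → ℝ} (hφm : Measurable φ) (hφ : ∀ p i, |φ p i| ≤ 1) {N : ℕ}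
    {ω : Fin N → Ω} {t : ℝ}
    (hdev : ∀ k l, ∑ j, (μ[signedGram φ k l] - signedGram φ k l (ω j)) < N * t)
    {v : Fin d → ℝ} (hfit : ∀ j, ip (φ (ω j)) v = 0) :
    ∫ p, ip (φ p) v ^ 2 ∂μ ≤ l1norm v ^ 2 * t := by
  rcases isEmpty_or_nonempty (Fin d) with _ | ⟨⟨k₀⟩⟩
  · simp [ip, l1norm]
  have hN : (0 : ℝ) < N := Nat.cast_pos.mpr <| Nat.pos_of_ne_zero fun hN0 => by
    subst hN0
    simpa using hdev k₀ k₀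
  set D : Fin d → Fin d → ℝ := fun k l => ∑ j, (μ[fun p => φ p k * φ p l] - φ (ω j) k * φ (ω j) l)
  have hD : ∀ k l, D k l = D l k := fun k l => by simp only [D, mul_comm]
  have hsignD : ∀ k l, gramSign k l * D k l ≤ N * t := fun k l => by
    refine le_of_eq_of_le ?_ (hdev k l).le
    simp only [D, signedGram, integral_const_mul, Finset.mul_sum, mul_sub]
  have hquad : ∑ k, ∑ l, v k * v l * D k l =
      N * ∫ p, ip (φ p) v ^ 2 ∂μ - ∑ j, ip (φ (ω j)) v ^ 2 := by
    rw [integral_sq_ip μ hφm hφ]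
    simp only [D, sq_ip, Finset.sum_sub_distrib, Finset.sum_const, Finset.card_univ,
      Fintype.card_fin, nsmul_eq_mul, mul_sub, Finset.mul_sum]
    congr 1
    · exact Finset.sum_congr rfl fun k _ => Finset.sum_congr rfl fun l _ => by ring
    · simp_rw [Finset.sum_comm (γ := Fin N)]
  have hemp : ∑ j, ip (φ (ω j)) v ^ 2 = 0 := by simp [hfit]
  have hbound := sum_mul_mul_le_of_gramSign_mul_le v hD hsignD
  rw [hquad, hemp, sub_zero, mul_left_comm] at hbound
  exact le_of_mul_le_mul_left hbound hN

lemma measureReal_signedGram_deviation_le (μ : Measure Ω) [IsProbabilityMeasure μ]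
    {φ : Ω → Fin d → ℝ} (hφm : Measurable φ) (hφ : ∀ p i, |φ p i| ≤ 1) (N : ℕ) {t : ℝ}
    (ht : 0 ≤ t) :
    (Measure.pi fun _ : Fin N => μ).real
        (⋃ k, ⋃ l, {ω | N * t ≤ ∑ j, (μ[signedGram φ k l] - signedGram φ k l (ω j))}) ≤
      d ^ 2 * Real.exp (-(N * t ^ 2) / 2) := by
  refine (measureReal_iUnion_fintype_le _).trans ?_
  refine (Finset.sum_le_sum fun k _ => measureReal_iUnion_fintype_le _).trans ?_
  calc ∑ k : Fin d, ∑ l : Fin d, (Measure.pi fun _ : Fin N => μ).real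
        {ω | N * t ≤ ∑ j, (μ[signedGram φ k l] - signedGram φ k l (ω j))}
      ≤ ∑ _k : Fin d, ∑ _l : Fin d, Real.exp (-(N * t ^ 2) / 2) :=
        Finset.sum_le_sum fun k _ => Finset.sum_le_sum fun l _ =>
          measureReal_sum_integral_sub_ge_le μ (measurable_signedGram hφm k l)
            (signedGram_mem_Icc hφ k l) N ht
    _ = d ^ 2 * Real.exp (-(N * t ^ 2) / 2) := by simp [sq, mul_assoc]

end Gram

section Greedy

variable {𝒜 : Type*} [Fintype 𝒜]

lemma ciSup_sub_le_of_forall_le [Nonempty 𝒜] {f g : 𝒜 → ℝ} {b : 𝒜} (hb : ∀ a, g a ≤ g b)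
    {η : ℝ} (hη : 0 < η) : (⨆ a, f a) - f b ≤ (∑ a, (g a - f a) ^ 2) / η + η := by
  have hS : ∀ a, (g a - f a) ^ 2 ≤ ∑ a, (g a - f a) ^ 2 := fun a =>
    Finset.single_le_sum (f := fun a => (g a - f a) ^ 2) (fun _ _ => sq_nonneg _)
      (Finset.mem_univ a)
  rw [sub_le_iff_le_add]
  refine ciSup_le fun a => ?_
  -- AM-GM: `2 η |u| ≤ u ^ 2 + η ^ 2` for the estimation errors `u` at `a` and at `b`
  have hAMGM : (f a - f b) * η ≤ (∑ a, (g a - f a) ^ 2) + η ^ 2 := by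
    nlinarith [hb a, hS a, hS b, two_mul_le_add_sq |g a - f a| η, two_mul_le_add_sq |g b - f b| η,
      sq_abs (g a - f a), sq_abs (g b - f b), le_abs_self (g b - f b), neg_abs_le (g a - f a)]
  have : f a - f b ≤ (∑ a, (g a - f a) ^ 2) / η + η := by
    rw [div_add' _ _ _ hη.ne', le_div_iff₀ hη]
    linarith
  linarith

variable [MeasurableSpace 𝒜] [MeasurableSingletonClass 𝒜] [Nonempty 𝒜]
  {𝒳 : Type*} [MeasurableSpace 𝒳] (ν : Measure 𝒳) [SFinite ν]

lemma integral_prod_uniformOfFintype {f : 𝒳 × 𝒜 → ℝ}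
    (hf : Integrable f (ν.prod (PMF.uniformOfFintype 𝒜).toMeasure)) :
    ∫ p, f p ∂(ν.prod (PMF.uniformOfFintype 𝒜).toMeasure) =
      (Fintype.card 𝒜 : ℝ)⁻¹ * ∑ a, ∫ x, f (x, a) ∂ν := by
  rw [integral_prod_symm f hf, PMF.integral_eq_sum, Finset.mul_sum]
  simp [PMF.uniformOfFintype_apply, ENNReal.toReal_inv]

lemma integral_ciSup_sub_le {d : ℕ} [IsProbabilityMeasure ν] {φ : 𝒳 × 𝒜 → Fin d → ℝ}
    (hφm : ∀ a, Measurable fun x => φ (x, a)) (hφ : ∀ x a i, |φ (x, a) i| ≤ 1)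
    {θstar θhat : Fin d → ℝ} {πhat : 𝒳 → 𝒜}
    (hgreedy : ∀ x a, ip (φ (x, a)) θhat ≤ ip (φ (x, πhat x)) θhat)
    {ε : ℝ} (hε : 0 < ε)
    (herr : ∫ p, ip (φ p) (θhat - θstar) ^ 2 ∂(ν.prod (PMF.uniformOfFintype 𝒜).toMeasure) ≤
      ε ^ 2 / (4 * Fintype.card 𝒜)) :
    ∫ x, ((⨆ a, ip (φ (x, a)) θstar) - ip (φ (x, πhat x)) θstar) ∂ν ≤ ε := by
  set A : ℝ := (Fintype.card 𝒜 : ℝ)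
  have hA : 0 < A := by positivity
  set Δ := θhat - θstar
  set S : 𝒳 → ℝ := fun x => ∑ a, ip (φ (x, a)) Δ ^ 2
  have hφm' : Measurable φ := measurable_from_prod_countable_left hφm
  have hsq_int : ∀ a, Integrable (fun x => ip (φ (x, a)) Δ ^ 2) ν := fun a =>
    integrable_sq_ip (hφm a) (fun x => hφ x a) Δ
  have hS_int : Integrable S ν := integrable_finsetSum _ fun a _ => hsq_int a
  have hgap : ∀ x, (⨆ a, ip (φ (x, a)) θstar) - ip (φ (x, πhat x)) θstar ≤ S x / (ε / 2) + ε / 2 :=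
    fun x => by
      simpa only [S, Δ, ip_sub_right] using ciSup_sub_le_of_forall_le (hgreedy x) (half_pos hε)
  have hgap_nonneg : ∀ x, 0 ≤ (⨆ a, ip (φ (x, a)) θstar) - ip (φ (x, πhat x)) θstar := fun x =>
    sub_nonneg.mpr <|
      le_ciSup (f := fun a => ip (φ (x, a)) θstar) (Set.finite_range _).bddAbove (πhat x)
  have hS : ∫ x, S x ∂ν =
      A * ∫ p, ip (φ p) Δ ^ 2 ∂(ν.prod (PMF.uniformOfFintype 𝒜).toMeasure) := by
    rw [integral_prod_uniformOfFintype ν (integrable_sq_ip hφm' (fun p => hφ p.1 p.2) Δ),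
      mul_inv_cancel_left₀ hA.ne', ← integral_finsetSum _ fun a _ => hsq_int a]
  calc ∫ x, ((⨆ a, ip (φ (x, a)) θstar) - ip (φ (x, πhat x)) θstar) ∂ν
      ≤ ∫ x, (S x / (ε / 2) + ε / 2) ∂ν :=
        integral_mono_of_nonneg (ae_of_all _ hgap_nonneg)
          ((hS_int.div_const _).add (integrable_const _)) (ae_of_all _ hgap)
    _ = (A * ∫ p, ip (φ p) Δ ^ 2 ∂(ν.prod (PMF.uniformOfFintype 𝒜).toMeasure)) / (ε / 2) +
          ε / 2 := by
        rw [integral_add (hS_int.div_const _) (integrable_const _), integral_div, hS]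
        simp
    _ ≤ A * (ε ^ 2 / (4 * A)) / (ε / 2) + ε / 2 := by gcongr
    _ = ε := by field_simp; ring

end Greedy

lemma sq_mul_exp_neg_le {d : ℕ} {δ s : ℝ} (hδ : 0 < δ) (hδ1 : δ ≤ 1)
    (hs : 4 * Real.log (d / δ) ≤ s) : (d : ℝ) ^ 2 * Real.exp (-s / 2) ≤ δ := by
  rcases Nat.eq_zero_or_pos d with rfl | hd
  · simpa using hδ.le
  have hratio : 0 < (d : ℝ) / δ := by positivity
  calc (d : ℝ) ^ 2 * Real.exp (-s / 2) ≤ d ^ 2 * Real.exp (-(2 * Real.log (d / δ))) := by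
        gcongr; linarith
    _ = δ ^ 2 := by
        rw [Real.exp_neg, show (2 : ℝ) = (2 : ℕ) by norm_num, Real.exp_nat_mul, Real.exp_log hratio]
        field_simp
    _ ≤ δ := by nlinarith

lemma ofReal_one_sub_le_of_measureReal_le {Ω : Type*} [MeasurableSpace Ω] {μ : Measure Ω}
    [IsProbabilityMeasure μ] {B E : Set Ω} {δ : ℝ} (hB : μ.real B ≤ δ) (hBE : Bᶜ ⊆ E) :
    ENNReal.ofReal (1 - δ) ≤ μ E := by
  refine ENNReal.ofReal_le_of_le_toReal ?_
  have hcover : 1 ≤ μ.real B + μ.real Bᶜ := by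
    simpa using measureReal_union_le (μ := μ) B Bᶜ
  have := measureReal_mono (μ := μ) hBE
  rw [← measureReal_def]
  linarith

lemma ip_sub_eq_zero_of_sum_sq_le {d N : ℕ} {x : Fin N → Fin d → ℝ} {θhat θstar : Fin d → ℝ}
    (h : ∑ j, (ip (x j) θhat - ip (x j) θstar) ^ 2 ≤ ∑ j, (ip (x j) θstar - ip (x j) θstar) ^ 2)
    (j : Fin N) : ip (x j) (θhat - θstar) = 0 := by
  simp only [sub_self, ne_eq, OfNat.ofNat_ne_zero, not_false_eq_true, zero_pow,
    Finset.sum_const_zero] at h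
  have hsum := (Finset.sum_eq_zero_iff_of_nonneg fun j _ => sq_nonneg _).mp
    (h.antisymm (Finset.sum_nonneg fun j _ => sq_nonneg _)) j (Finset.mem_univ j)
  rw [ip_sub_right]
  exact pow_eq_zero_iff two_ne_zero |>.mp hsum

/-- Lasso-based learning of a near-optimal greedy policy in a horizon-1
ℓ₁-bounded linear MDP (linear contextual bandit): with `N ≥ C₀ C⁴ A² ε⁻⁴ log(d/δ)`
i.i.d. samples `(xⁱ, aⁱ)` with `xⁱ ∼ ν` and `aⁱ` uniform, any ℓ₁-constrained least-squares
minimizer `θ̂` and any greedy policy `π̂` for it has suboptimality at most `ε`, with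
probability at least `1 − δ`. -/
theorem stmt_0 :
    ∃ C₀ : ℝ, 0 < C₀ ∧
      ∀ (d : ℕ) (𝒜 : Type) [Fintype 𝒜] [Nonempty 𝒜] [MeasurableSpace 𝒜]
        [MeasurableSingletonClass 𝒜]
        (𝒳 : Type) [MeasurableSpace 𝒳]
        (ν : Measure 𝒳) [IsProbabilityMeasure ν]
        (φ : 𝒳 × 𝒜 → Fin d → ℝ),
        (∀ a : 𝒜, Measurable fun x : 𝒳 => φ (x, a)) →
        (∀ (x : 𝒳) (a : 𝒜) (i : Fin d), |φ (x, a) i| ≤ 1) →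
        ∀ C : ℝ, 1 ≤ C →
        ∀ θstar : Fin d → ℝ, l1norm θstar ≤ C →
        ∀ ε δ : ℝ, 0 < ε → ε < 1 → 0 < δ → δ < 1 →
        ∀ N : ℕ,
          C₀ * C ^ 4 * (Fintype.card 𝒜 : ℝ) ^ 2 * ε⁻¹ ^ 4 * Real.log ((d : ℝ) / δ) ≤ (N : ℝ) →
          ENNReal.ofReal (1 - δ) ≤
            (Measure.pi fun _ : Fin N => ν.prod (PMF.uniformOfFintype 𝒜).toMeasure)
              {ω : Fin N → 𝒳 × 𝒜 |
                ∀ θhat : Fin d → ℝ,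
                  l1norm θhat ≤ C →
                  (∀ θ : Fin d → ℝ, l1norm θ ≤ C →
                    ∑ j : Fin N, (ip (φ (ω j)) θhat - ip (φ (ω j)) θstar) ^ 2 ≤
                      ∑ j : Fin N, (ip (φ (ω j)) θ - ip (φ (ω j)) θstar) ^ 2) →
                  ∀ πhat : 𝒳 → 𝒜, Measurable πhat →
                    (∀ (x : 𝒳) (a : 𝒜), ip (φ (x, a)) θhat ≤ ip (φ (x, πhat x)) θhat) →
                    (∫ x : 𝒳,
                      ((⨆ a : 𝒜, ip (φ (x, a)) θstar) - ip (φ (x, πhat x)) θstar) ∂ν) ≤ ε} := by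
  refine ⟨1024, by norm_num, ?_⟩
  intro d 𝒜 _ _ _ _ 𝒳 _ ν _ φ hφm hφ C hC θstar hθstar ε δ hε _ hδ hδ1 N hN
  set A : ℝ := (Fintype.card 𝒜 : ℝ)
  set t := ε ^ 2 / (16 * A * C ^ 2) with ht
  have hA : 0 < A := by positivity
  have hφm' : Measurable φ := measurable_from_prod_countable_left hφm
  have hφ' : ∀ p i, |φ p i| ≤ 1 := fun p => hφ p.1 p.2
  have hNt : 4 * Real.log (d / δ) ≤ N * t ^ 2 := by
    have hcoef : 1024 * C ^ 4 * A ^ 2 * ε⁻¹ ^ 4 * t ^ 2 = 4 := by rw [ht]; field_simp; ring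
    calc 4 * Real.log (d / δ) = 1024 * C ^ 4 * A ^ 2 * ε⁻¹ ^ 4 * Real.log (d / δ) * t ^ 2 := by
          rw [← hcoef]; ring
      _ ≤ N * t ^ 2 := by gcongr
  refine ofReal_one_sub_le_of_measureReal_le ((measureReal_signedGram_deviation_le _ hφm' hφ' N
    (by positivity)).trans (sq_mul_exp_neg_le hδ hδ1.le hNt)) ?_
  intro ω hω θhat hθhat hmin πhat _ hgreedy
  simp only [Set.mem_compl_iff, Set.mem_iUnion, Set.mem_ofPred_eq, not_exists, not_le] at hω
  refine integral_ciSup_sub_le ν hφm hφ hgreedy hε ?_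
  calc ∫ p, ip (φ p) (θhat - θstar) ^ 2 ∂(ν.prod (PMF.uniformOfFintype 𝒜).toMeasure)
      ≤ l1norm (θhat - θstar) ^ 2 * t := integral_sq_ip_le_of_signedGram_deviation _ hφm' hφ' hω
        (ip_sub_eq_zero_of_sum_sq_le (hmin θstar hθstar))
    _ ≤ (2 * C) ^ 2 * t := by
        gcongr
        · exact l1norm_nonneg _
        · linarith [l1norm_sub_le θhat θstar]
    _ = ε ^ 2 / (4 * A) := by rw [ht]; field_simp; ring
end
end

section
/- Let d, m ∈ ℕ and ξ, C > 0. Let μ¹,…,μ^m ∈ ℝ^d satisfy Σ_{j=1}^m ‖μ^j‖₁ ≤ C. Suppose T ∈ ℕ, subsets [m] = B₁ ⊇ B₂ ⊇ ⋯ ⊇ B_{T+1} of [m], and vectors φ¹,…,φ^T ∈ ℝ^d with ‖φ^t‖_∞ ≤ 1 for each t, satisfy the following for every t ∈ [T]: ⟨φ^t, Σ_{j∈B_t} μ^j⟩ ≥ ξ, and B_{t+1} = B_t \ G_t where G_t := {j ∈ B_t : ⟨φ^t, μ^j⟩ ≥ (ξ/(2C))·‖μ^j‖₁}. Then T ≤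 2C/ξ. -/
noncomputable section

/-- the counting argument behind the size bound for `GreedyCover`: if at
each round `t < T` the chosen direction `φᵗ` (with `‖φᵗ‖_∞ ≤ 1`) achieves
`⟨φᵗ, ∑_{j ∈ B_t} μʲ⟩ ≥ ξ` and `B_{t+1}` removes exactly the indices `j ∈ B_t` with
`⟨φᵗ, μʲ⟩ ≥ (ξ/2C)‖μʲ‖₁`, then `T ≤ 2C/ξ`. -/
theorem stmt_2 {d m : ℕ} (ξ C : ℝ) (hξ : 0 < ξ) (hC : 0 < C)
    (μ : Fin m → Fin d → ℝ) (hμC : ∑ j, l1norm (μ j) ≤ C)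
    (T : ℕ) (B : ℕ → Finset (Fin m)) (φ : ℕ → Fin d → ℝ)
    (hB0 : B 0 = Finset.univ)
    (hφbdd : ∀ t < T, ∀ i, |φ t i| ≤ 1)
    (hlarge : ∀ t < T, ξ ≤ ip (φ t) (∑ j ∈ B t, μ j))
    (hstep : ∀ t < T, ∀ j : Fin m,
      j ∈ B (t + 1) ↔ j ∈ B t ∧ ¬ (ξ / (2 * C) * l1norm (μ j) ≤ ip (φ t) (μ j))) :
    (T : ℝ) ≤ 2 * C / ξ := by
  have hl1nonneg : ∀ v : Fin d → ℝ, 0 ≤ l1norm v := by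
    intro v; exact Finset.sum_nonneg fun i _ => abs_nonneg _
  set f : ℕ → ℝ := fun t => ∑ j ∈ B t, l1norm (μ j) with hf
  have hsub : ∀ t < T, B (t + 1) ⊆ B t := by
    intro t ht j hj; exact ((hstep t ht j).mp hj).1
  -- main per-round bound
  have hkey : ∀ t < T, ξ / 2 ≤ f t - f (t + 1) := by
    intro t ht
    have hip : ip (φ t) (∑ j ∈ B t, μ j) = ∑ j ∈ B t, ip (φ t) (μ j) := by
      unfold ip
      rw [Finset.sum_comm]
      congr 1; ext i
      rw [Finset.sum_apply, Finset.mul_sum]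
    have h1 : ξ ≤ ∑ j ∈ B t, ip (φ t) (μ j) := by
      rw [← hip]; exact hlarge t ht
    have hsplit : ∑ j ∈ B t, ip (φ t) (μ j)
        = ∑ j ∈ B t \ B (t + 1), ip (φ t) (μ j) + ∑ j ∈ B (t + 1), ip (φ t) (μ j) :=
      (Finset.sum_sdiff (hsub t ht)).symm
    -- bound on the removed part: ip ≤ l1norm
    have hipl1 : ∀ j, ip (φ t) (μ j) ≤ l1norm (μ j) := by
      intro j
      unfold ip l1norm
      apply Finset.sum_le_sum
      intro i _
      calc φ t i * μ j i ≤ |φ t i * μ j i| := le_abs_self _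
        _ = |φ t i| * |μ j i| := abs_mul _ _
        _ ≤ 1 * |μ j i| := by
            apply mul_le_mul_of_nonneg_right (hφbdd t ht i) (abs_nonneg _)
        _ = |μ j i| := one_mul _
    have hA : ∑ j ∈ B t \ B (t + 1), ip (φ t) (μ j)
        ≤ ∑ j ∈ B t \ B (t + 1), l1norm (μ j) :=
      Finset.sum_le_sum fun j _ => hipl1 j
    -- bound on the kept part
    have hBp : ∑ j ∈ B (t + 1), ip (φ t) (μ j)
        ≤ ∑ j ∈ B (t + 1), ξ / (2 * C) * l1norm (μ j) := by
      apply Finset.sum_le_sum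
      intro j hj
      exact le_of_lt (not_le.mp ((hstep t ht j).mp hj).2)
    have hBp2 : ∑ j ∈ B (t + 1), ξ / (2 * C) * l1norm (μ j) ≤ ξ / 2 := by
      rw [← Finset.mul_sum]
      have hsum : ∑ j ∈ B (t + 1), l1norm (μ j) ≤ C := by
        calc ∑ j ∈ B (t + 1), l1norm (μ j)
            ≤ ∑ j, l1norm (μ j) :=
              Finset.sum_le_sum_of_subset_of_nonneg (Finset.subset_univ _)
                (fun j _ _ => hl1nonneg _)
          _ ≤ C := hμC
      have hpos : 0 < ξ / (2 * C) := by positivity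
      calc ξ / (2 * C) * ∑ j ∈ B (t + 1), l1norm (μ j)
          ≤ ξ / (2 * C) * C := by
            exact mul_le_mul_of_nonneg_left hsum (le_of_lt hpos)
        _ = ξ / 2 := by field_simp
    have hfd : f t - f (t + 1) = ∑ j ∈ B t \ B (t + 1), l1norm (μ j) := by
      rw [hf]
      simp only
      rw [Finset.sum_sdiff_eq_sub (hsub t ht)]
    rw [hfd]
    nlinarith [h1, hsplit, hA, hBp, hBp2]
  -- telescoping
  have htele : ∑ t ∈ Finset.range T, (f t - f (t + 1)) = f 0 - f T :=
    Finset.sum_range_sub' f T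
  have hTbound : (T : ℝ) * (ξ / 2) ≤ C := by
    have h1 : (T : ℝ) * (ξ / 2) ≤ ∑ t ∈ Finset.range T, (f t - f (t + 1)) := by
      calc (T : ℝ) * (ξ / 2) = ∑ _t ∈ Finset.range T, ξ / 2 := by
            rw [Finset.sum_const, Finset.card_range, nsmul_eq_mul]
        _ ≤ _ := Finset.sum_le_sum fun t ht => hkey t (Finset.mem_range.mp ht)
    have h2 : f 0 - f T ≤ C := by
      have h3 : f 0 ≤ C := by
        rw [hf]; simp only [hB0]; exact hμC
      have h4 : 0 ≤ f T := Finset.sum_nonneg fun j _ => hl1nonneg _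
      linarith
    linarith [htele ▸ h1]
  rw [le_div_iff₀ hξ]
  nlinarith
end
end

section
/- Let d, m ∈ ℕ, let C > 0, ξ ∈ (0, C], and ε ≥ 0. Let U ⊆ ℝ^d be nonempty, let Ψ ⊆ U be a finite set with |Ψ| ≤ 2C/ξ, let μ̂¹,…,μ̂^m ∈ ℝ^d satisfy Σ_{j=1}^m ‖μ̂^j‖₁ ≤ C, and let G ⊆ [m]. Assume: (i) for every u ∈ U and j ∈ [m], ⟨u, μ̂^j⟩ ≥ −ε·‖μ̂^j‖₁; (ii) for every u ∈ U, Σ_{j∈[m]\G} ⟨u, μ̂^j⟩ ≤ 3ξ/2; (iii) for every j ∈ G and every u ∈ U there exists u′ ∈ Ψ with ⟨u′, μ̂^j⟩ ≥ (ξ/(4C))·⟨u, μ̂^j⟩. Then for every u ∈ U, every R > 0, and every function g : [m] → [0, R]: Σ_{j=1}^m ⟨u, μ̂^j⟩·g(j) ≤ 17·C³·R·ε/ξ² + 3Rξ/2 + (4C/ξ)·Σ_{u′∈Ψ} Σ_{j=1}^m ⟨u′, μ̂^j⟩·g(j). -/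
noncomputable section

/-- the deterministic coverage inequality at the heart of the paper's
Lemma `aux-pc-coreset`: from approximate nonnegativity (i), the small mass of uncovered
indices (ii), and the multiplicative coverage of covered indices by `Ψ` (iii), one
gets the weighted coverage bound for every `u ∈ U`, `R > 0` and `g : [m] → [0,R]`. -/
theorem stmt_3 {d m : ℕ} (C ξ ε : ℝ) (hC : 0 < C) (hξ : 0 < ξ) (hξC : ξ ≤ C) (hε : 0 ≤ ε)
    (U : Set (Fin d → ℝ)) (hU : U.Nonempty)
    (Ψ : Finset (Fin d → ℝ)) (hΨU : ↑Ψ ⊆ U) (hΨcard : (Ψ.card : ℝ) ≤ 2 * C / ξ)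
    (μ : Fin m → Fin d → ℝ) (hμC : ∑ j, l1norm (μ j) ≤ C)
    (G : Finset (Fin m))
    (h1 : ∀ u ∈ U, ∀ j : Fin m, -(ε * l1norm (μ j)) ≤ ip u (μ j))
    (h2 : ∀ u ∈ U, ∑ j ∈ Finset.univ \ G, ip u (μ j) ≤ 3 * ξ / 2)
    (h3 : ∀ j ∈ G, ∀ u ∈ U, ∃ u' ∈ Ψ, ξ / (4 * C) * ip u (μ j) ≤ ip u' (μ j)) :
    ∀ u ∈ U, ∀ R : ℝ, 0 < R → ∀ g : Fin m → ℝ, (∀ j, g j ∈ Set.Icc 0 R) →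
      ∑ j, ip u (μ j) * g j ≤
        17 * C ^ 3 * R * ε / ξ ^ 2 + 3 * R * ξ / 2 +
          4 * C / ξ * ∑ u' ∈ Ψ, ∑ j, ip u' (μ j) * g j := by
  intro u hu R hR g hg
  have hl1 : ∀ j, 0 ≤ l1norm (μ j) := fun j => Finset.sum_nonneg fun i _ => abs_nonneg _
  have hg0 : ∀ j, 0 ≤ g j := fun j => (hg j).1
  have hgR : ∀ j, g j ≤ R := fun j => (hg j).2
  have hR0 : (0:ℝ) ≤ R := le_of_lt hR
  have h4C : (0:ℝ) < 4 * C := by linarith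
  set F : ℝ := 4 * C / ξ with hFdef
  have hF4 : (4:ℝ) ≤ F := by
    rw [hFdef, le_div_iff₀ hξ]; nlinarith
  have hF0 : (0:ℝ) < F := by linarith
  set T : Fin m → ℝ := fun j => ∑ u' ∈ Ψ, ip u' (μ j) * g j with hT
  set P : ℝ := (Ψ.card : ℝ) with hPdef
  have hP0 : (0:ℝ) ≤ P := Nat.cast_nonneg _
  have hPF : P ≤ F / 2 := by
    have : F / 2 = 2 * C / ξ := by rw [hFdef]; ring
    rw [this]; exact hΨcard
  -- (B): lower bound on every term, for any vector in U
  have hB : ∀ v ∈ U, ∀ j, -(R * ε * l1norm (μ j)) ≤ ip v (μ j) * g j := by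
    intro v hv j
    have h := h1 v hv j
    have h1' : 0 ≤ (ip v (μ j) + ε * l1norm (μ j)) * g j :=
      mul_nonneg (by linarith) (hg0 j)
    have h2' : 0 ≤ ε * l1norm (μ j) * (R - g j) :=
      mul_nonneg (mul_nonneg hε (hl1 j)) (by linarith [hgR j])
    nlinarith
  -- (A): upper bound on every term for u
  have hA : ∀ j, ip u (μ j) * g j ≤ R * ip u (μ j) + R * ε * l1norm (μ j) := by
    intro j
    have h := h1 u hu j
    have h1' : 0 ≤ (R - g j) * (ip u (μ j) + ε * l1norm (μ j)) :=
      mul_nonneg (by linarith [hgR j]) (by linarith)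
    have h2' : 0 ≤ g j * (ε * l1norm (μ j)) :=
      mul_nonneg (hg0 j) (mul_nonneg hε (hl1 j))
    nlinarith
  -- lower bound on T j
  have hTlb : ∀ j, -(P * (R * ε * l1norm (μ j))) ≤ T j := by
    intro j
    calc -(P * (R * ε * l1norm (μ j))) = ∑ _w ∈ Ψ, -(R * ε * l1norm (μ j)) := by
          rw [Finset.sum_const, nsmul_eq_mul, hPdef]; ring
      _ ≤ ∑ w ∈ Ψ, ip w (μ j) * g j := Finset.sum_le_sum fun w hw => hB w (hΨU hw) j
      _ = T j := rfl
  -- sub-sums of ℓ₁ norms are bounded by C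
  have hLsub : ∀ s : Finset (Fin m), ∑ j ∈ s, l1norm (μ j) ≤ C := fun s =>
    le_trans (Finset.sum_le_sum_of_subset_of_nonneg (Finset.subset_univ s)
      (fun j _ _ => hl1 j)) hμC
  -- per-index bound on covered indices
  have hGj : ∀ j ∈ G, ip u (μ j) * g j ≤ F * (T j + P * (R * ε * l1norm (μ j))) := by
    intro j hj
    obtain ⟨u', hu'Ψ, hcov⟩ := h3 j hj u hu
    have hcov' : ξ * ip u (μ j) ≤ 4 * C * ip u' (μ j) := by
      rw [div_mul_eq_mul_div, div_le_iff₀ h4C] at hcov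
      linarith
    have hstep1 : ξ * (ip u (μ j) * g j) ≤ 4 * C * (ip u' (μ j) * g j) := by
      nlinarith [mul_le_mul_of_nonneg_right hcov' (hg0 j)]
    have hstep2 : ip u' (μ j) * g j ≤ T j + P * (R * ε * l1norm (μ j)) := by
      have hsum : T j = ip u' (μ j) * g j + ∑ w ∈ Ψ.erase u', ip w (μ j) * g j :=
        (Finset.add_sum_erase Ψ (fun w => ip w (μ j) * g j) hu'Ψ).symm
      have herase : -(P * (R * ε * l1norm (μ j))) ≤ ∑ w ∈ Ψ.erase u', ip w (μ j) * g j := by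
        have hK : 0 ≤ R * ε * l1norm (μ j) :=
          mul_nonneg (mul_nonneg hR0 hε) (hl1 j)
        have hcard : ((Ψ.erase u').card : ℝ) ≤ P := by
          rw [hPdef]
          exact_mod_cast Finset.card_le_card (Finset.erase_subset _ _)
        calc -(P * (R * ε * l1norm (μ j)))
            ≤ -(((Ψ.erase u').card : ℝ) * (R * ε * l1norm (μ j))) := by nlinarith
          _ = ∑ _w ∈ Ψ.erase u', -(R * ε * l1norm (μ j)) := by
              rw [Finset.sum_const, nsmul_eq_mul]; ring
          _ ≤ _ := Finset.sum_le_sum fun w hw =>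
              hB w (hΨU (Finset.mem_of_mem_erase hw)) j
      linarith
    rw [hFdef, div_mul_eq_mul_div, le_div_iff₀ hξ]
    nlinarith [mul_le_mul_of_nonneg_left hstep2 (le_of_lt h4C)]
  -- split total sum
  have hsplit : ∑ j ∈ Finset.univ \ G, ip u (μ j) * g j + ∑ j ∈ G, ip u (μ j) * g j
      = ∑ j, ip u (μ j) * g j := Finset.sum_sdiff (Finset.subset_univ G)
  -- bound on uncovered part
  have hBound1 : ∑ j ∈ Finset.univ \ G, ip u (μ j) * g j ≤ R * (3 * ξ / 2) + R * ε * C := by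
    have e1 : ∑ j ∈ Finset.univ \ G, ip u (μ j) * g j
        ≤ ∑ j ∈ Finset.univ \ G, (R * ip u (μ j) + R * ε * l1norm (μ j)) :=
      Finset.sum_le_sum fun j _ => hA j
    have e2 : ∑ j ∈ Finset.univ \ G, (R * ip u (μ j) + R * ε * l1norm (μ j))
        = R * ∑ j ∈ Finset.univ \ G, ip u (μ j)
          + R * ε * ∑ j ∈ Finset.univ \ G, l1norm (μ j) := by
      rw [Finset.sum_add_distrib, Finset.mul_sum, Finset.mul_sum]
    have e3 := mul_le_mul_of_nonneg_left (h2 u hu) hR0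
    have e4 := mul_le_mul_of_nonneg_left (hLsub (Finset.univ \ G)) (mul_nonneg hR0 hε)
    linarith
  -- bound on covered part
  have hBound2 : ∑ j ∈ G, ip u (μ j) * g j
      ≤ F * ∑ j ∈ G, T j + F * P * (R * ε) * C := by
    have e1 : ∑ j ∈ G, ip u (μ j) * g j
        ≤ ∑ j ∈ G, (F * T j + F * P * (R * ε) * l1norm (μ j)) := by
      refine Finset.sum_le_sum fun j hj => ?_
      have := hGj j hj; linarith [this]
    have e2 : ∑ j ∈ G, (F * T j + F * P * (R * ε) * l1norm (μ j))
        = F * ∑ j ∈ G, T j + F * P * (R * ε) * ∑ j ∈ G, l1norm (μ j) := by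
      rw [Finset.sum_add_distrib, Finset.mul_sum, Finset.mul_sum]
    have e3 := mul_le_mul_of_nonneg_left (hLsub G)
      (mul_nonneg (mul_nonneg (le_of_lt hF0) hP0) (mul_nonneg hR0 hε))
    linarith
  -- covered T-sum vs total T-sum
  have hTsum : ∑ j ∈ G, T j ≤ ∑ j, T j + P * (R * ε) * C := by
    have hsd : ∑ j ∈ Finset.univ \ G, T j + ∑ j ∈ G, T j = ∑ j, T j :=
      Finset.sum_sdiff (Finset.subset_univ G)
    have e1 : ∑ j ∈ Finset.univ \ G, (-(P * (R * ε)) * l1norm (μ j))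
        ≤ ∑ j ∈ Finset.univ \ G, T j :=
      Finset.sum_le_sum fun j _ => by linarith [hTlb j]
    have e2 : ∑ j ∈ Finset.univ \ G, (-(P * (R * ε)) * l1norm (μ j))
        = -(P * (R * ε)) * ∑ j ∈ Finset.univ \ G, l1norm (μ j) :=
      (Finset.mul_sum _ _ _).symm
    have e3 := mul_le_mul_of_nonneg_left (hLsub (Finset.univ \ G))
      (mul_nonneg hP0 (mul_nonneg hR0 hε))
    linarith
  -- swap the double sum
  have hswap : ∑ j, T j = ∑ u' ∈ Ψ, ∑ j, ip u' (μ j) * g j := by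
    simp only [hT]; exact Finset.sum_comm
  set S : ℝ := ∑ u' ∈ Ψ, ∑ j, ip u' (μ j) * g j with hSdef
  have FhT := mul_le_mul_of_nonneg_left hTsum (le_of_lt hF0)
  rw [hswap] at FhT
  -- assemble
  have htot : ∑ j, ip u (μ j) * g j
      ≤ R * (3 * ξ / 2) + R * ε * C + F * S + 2 * (F * P * (R * ε) * C) := by
    linarith [hsplit, hBound1, hBound2, FhT]
  have heq : 17 * C ^ 3 * R * ε / ξ ^ 2 = 17 / 16 * F ^ 2 * (R * ε * C) := by
    rw [hFdef]; field_simp; ring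
  rw [heq]
  have hRεC : 0 ≤ R * ε * C := mul_nonneg (mul_nonneg hR0 hε) (le_of_lt hC)
  have ha := mul_le_mul_of_nonneg_left hPF
    (mul_nonneg (mul_nonneg (by norm_num : (0:ℝ) ≤ 2) (le_of_lt hF0)) hRεC)
  have hF16 : (16:ℝ) ≤ F ^ 2 := by nlinarith
  have hb := mul_le_mul_of_nonneg_left hF16 hRεC
  linarith [htot, ha, hb]
end
end

section
/- Fix d, A, n ∈ ℕ and B > 0. Let 𝒳 ⊂ ℝ^{d×A} denote the set of d × A real matrices all of whose columns have ℓ_∞ norm at most 1. For θ ∈ ℝ^d and X ∈ 𝒳, with X_a ∈ ℝ^d denoting the a-th column of X, define f_θ(X) := min{ 0, min_{a∈[A]} ⟨X_a, θ⟩ }, and let ℱ_{d,B} := { f_θ : θ ∈ ℝ^d, ‖θ‖₁ ≤ B }. Then the Rademacher complexity satisfies R_n(ℱ_{d,B}) ≤ A·B·√(π·log(2d)/n). -/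
/-!
Averaging over the `2ⁿ` sign vectors turns the Rademacher complexity into a finite sum, and the
Gaussian comparison is not needed. The Ledoux–Talagrand contraction, proved one coordinate at a
time by pairing each sign vector with its flip at that coordinate, removes the 1-Lipschitz clip
`min 0 ·`. Writing `min u v = (u + v) / 2 - |u - v| / 2` and contracting `|·|` shows that a
pointwise minimum costs at most the sum of the two complexities, so the minimum of `A` linear
classes costs `A` times one of them. A linear class over the ℓ₁-ball is bounded by ℓ∞-duality and
Massart's lemma (the sign MGF is `∏ᵢ cosh xᵢ ≤ exp (‖x‖₂² / 2)`), which gives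
`R_n ≤ A B √(2 log (2d) / n)`; finally `2 ≤ π`.
-/

open MeasureTheory
open scoped ENNReal

noncomputable section

/-- The uniform distribution on `{-1, +1} ⊆ ℝ`. -/
def signMeasure : Measure ℝ :=
  (2 : ℝ≥0∞)⁻¹ • Measure.dirac (-1) + (2 : ℝ≥0∞)⁻¹ • Measure.dirac 1

/-- The distribution of `n` i.i.d. uniform signs. -/
def signPi (n : ℕ) : Measure (Fin n → ℝ) := Measure.pi fun _ => signMeasure

/-- The empirical Rademacher complexity `R_n(F; x₁,…,x_n)` of a class `F` of real-valued
functions on `𝒳` with respect to the sample `x : Fin n → 𝒳`. -/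
def radComp {𝒳 : Type*} (n : ℕ) (F : Set (𝒳 → ℝ)) (x : Fin n → 𝒳) : ℝ :=
  (1 / (n : ℝ)) * ∫ ε : Fin n → ℝ, (⨆ f : F, ∑ i, ε i * f.1 (x i)) ∂signPi n

/-- `d × A` real matrices all of whose columns have ℓ_∞ norm at most 1 (columns indexed
by `Fin A`). -/
abbrev MatBall (d A : ℕ) : Type := {X : Fin A → Fin d → ℝ // ∀ a i, |X a i| ≤ 1}

/-- The class `ℱ_{d,B}` of functions `X ↦ min{0, min_a ⟨X_a, θ⟩}` for `‖θ‖₁ ≤ B`. -/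
def minLinClass (d A : ℕ) (B : ℝ) : Set (MatBall d A → ℝ) :=
  {h | ∃ θ : Fin d → ℝ, (∑ i, |θ i| ≤ B) ∧
    h = fun X => min 0 (⨅ a : Fin A, ∑ i, X.1 a i * θ i)}

open Finset Real

def boolSign (b : Bool) : ℝ := if b then 1 else -1

lemma abs_boolSign (b : Bool) : |boolSign b| = 1 := by cases b <;> simp [boolSign]

lemma boolSign_not (b : Bool) : boolSign (!b) = -boolSign b := by cases b <;> simp [boolSign]

def uniformBool : Measure Bool := (2 : ℝ≥0∞)⁻¹ • Measure.count

instance : IsProbabilityMeasure uniformBool :=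
  ⟨by rw [uniformBool, Measure.smul_apply, Measure.count_univ]; simp [ENNReal.inv_mul_cancel]⟩

lemma signMeasure_eq_map : signMeasure = uniformBool.map boolSign := by
  rw [uniformBool, Measure.map_smul, Measure.count,
    Measure.map_sum (measurable_of_countable _).aemeasurable]
  simp [signMeasure, Measure.map_dirac, boolSign, Measure.sum_fintype, add_comm]

lemma signPi_eq_sum_dirac (n : ℕ) :
    signPi n = (2 ^ n : ℝ≥0∞)⁻¹ • ∑ s : Fin n → Bool, Measure.dirac fun i => boolSign (s i) := by
  have hpi : Measure.pi (fun _ : Fin n => uniformBool) =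
      (2 ^ n : ℝ≥0∞)⁻¹ • Measure.sum Measure.dirac := by
    refine Measure.ext_of_singleton fun s => ?_
    rw [Measure.pi_singleton]
    simp [uniformBool, ENNReal.inv_pow]
  rw [signPi, signMeasure_eq_map,
    ← Measure.pi_map_pi fun _ => (measurable_of_countable _).aemeasurable, hpi,
    Measure.map_smul, Measure.map_sum (measurable_of_countable _).aemeasurable]
  simp [Measure.map_dirac, Measure.sum_fintype]

lemma integral_signPi (n : ℕ) (F : (Fin n → ℝ) → ℝ) :
    ∫ ε, F ε ∂signPi n = (2 ^ n : ℝ)⁻¹ * ∑ s : Fin n → Bool, F fun i => boolSign (s i) := by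
  rw [signPi_eq_sum_dirac, integral_smul_measure,
    integral_finsetSum_measure fun s _ => integrable_dirac (by simp)]
  simp [integral_dirac]

lemma sum_mul_eq_of_forall_ne_eq {κ : Type*} [Fintype κ] {e e' y y' : κ → ℝ} (j : κ)
    (he : ∀ i ≠ j, e' i = e i) (hy : ∀ i ≠ j, y' i = y i) :
    ∑ i, e' i * y' i = ∑ i, e i * y i + (e' j * y' j - e j * y j) := by
  classical
  rw [Fintype.sum_eq_add_sum_compl j, Fintype.sum_eq_add_sum_compl j (fun i => e i * y i)]
  have hrest : ∑ i ∈ {j}ᶜ, e' i * y' i = ∑ i ∈ {j}ᶜ, e i * y i :=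
    sum_congr rfl fun i hi => by
      rw [he i (by simpa using hi), hy i (by simpa using hi)]
  rw [hrest]
  ring

lemma iSup_add_add_iSup_sub_le {ι : Type*} [Nonempty ι] {a p q : ι → ℝ}
    (hq₁ : BddAbove (Set.range fun θ => a θ + q θ)) (hq₂ : BddAbove (Set.range fun θ => a θ - q θ))
    (hpq : ∀ θ₁ θ₂, p θ₁ - p θ₂ ≤ |q θ₁ - q θ₂|) :
    (⨆ θ, a θ + p θ) + (⨆ θ, a θ - p θ) ≤ (⨆ θ, a θ + q θ) + (⨆ θ, a θ - q θ) := by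
  refine ciSup_add_ciSup_le fun θ₁ θ₂ => ?_
  have h := hpq θ₁ θ₂
  rcases abs_cases (q θ₁ - q θ₂) with ⟨hq, -⟩ | ⟨hq, -⟩
  · linarith [le_ciSup hq₁ θ₁, le_ciSup hq₂ θ₂]
  · linarith [le_ciSup hq₁ θ₂, le_ciSup hq₂ θ₁]

section SignSupSum

variable {ι κ : Type*} [Fintype κ]

lemma bddAbove_range_sum_boolSign_mul {w : ι → κ → ℝ} {C : ℝ} (hw : ∀ θ i, |w θ i| ≤ C)
    (s : κ → Bool) : BddAbove (Set.range fun θ => ∑ i, boolSign (s i) * w θ i) := by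
  refine ⟨Fintype.card κ * C, Set.forall_mem_range.2 fun θ => ?_⟩
  calc ∑ i, boolSign (s i) * w θ i ≤ ∑ _i : κ, C :=
        sum_le_sum fun i _ => (le_abs_self _).trans <| by
          rw [abs_mul, abs_boolSign, one_mul]; exact hw θ i
    _ = Fintype.card κ * C := by simp

variable [DecidableEq κ]

/-- `2 ^ |κ|` times `𝔼 sup_θ ∑ᵢ εᵢ w θ i` for uniformly random signs `ε : κ → {±1}`. -/
def signSupSum (w : ι → κ → ℝ) : ℝ := ∑ s : κ → Bool, ⨆ θ, ∑ i, boolSign (s i) * w θ i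

lemma iSup_add_iSup_flip_le_update [Nonempty ι] {w : ι → κ → ℝ} {v : ι → ℝ} {C : ℝ}
    (hw : ∀ θ i, |w θ i| ≤ C) (hv : ∀ θ, |v θ| ≤ C) (j : κ)
    (hwv : ∀ θ₁ θ₂, |w θ₁ j - w θ₂ j| ≤ |v θ₁ - v θ₂|) (s : κ → Bool) :
    let s' := Function.update s j (!s j)
    let w' := fun θ => Function.update (w θ) j (v θ)
    (⨆ θ, ∑ i, boolSign (s i) * w θ i) + (⨆ θ, ∑ i, boolSign (s' i) * w θ i) ≤
      (⨆ θ, ∑ i, boolSign (s i) * w' θ i) + (⨆ θ, ∑ i, boolSign (s' i) * w' θ i) := by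
  intro s' w'
  have hw' (θ i) : |w' θ i| ≤ C := by
    rcases eq_or_ne i j with rfl | hij
    · simpa [w'] using hv θ
    · simpa [w', hij] using hw θ i
  set ε := boolSign (s j)
  have hs'_j : boolSign (s' j) = -ε := by simp [s', ε, boolSign_not]
  have hs'_ne : ∀ i ≠ j, boolSign (s' i) = boolSign (s i) := fun i hi => by simp [s', hi]
  have hw'_ne (θ) : ∀ i ≠ j, w' θ i = w θ i := fun i hi => by simp [w', hi]
  set a : ι → ℝ := fun θ => ∑ i, boolSign (s i) * w θ i - ε * w θ j
  have h₁ (θ) : ∑ i, boolSign (s i) * w θ i = a θ + ε * w θ j := by ring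
  have h₂ (θ) : ∑ i, boolSign (s' i) * w θ i = a θ - ε * w θ j := by
    rw [sum_mul_eq_of_forall_ne_eq j hs'_ne fun _ _ => rfl, hs'_j]; ring
  have h₃ (θ) : ∑ i, boolSign (s i) * w' θ i = a θ + ε * v θ := by
    rw [sum_mul_eq_of_forall_ne_eq j (fun _ _ => rfl) (hw'_ne θ)]
    simp only [w', Function.update_self]; ring
  have h₄ (θ) : ∑ i, boolSign (s' i) * w' θ i = a θ - ε * v θ := by
    rw [sum_mul_eq_of_forall_ne_eq j hs'_ne (hw'_ne θ), hs'_j]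
    simp only [w', Function.update_self]; ring
  simp only [h₁, h₂, h₃, h₄]
  refine iSup_add_add_iSup_sub_le ?_ ?_ fun θ₁ θ₂ => ?_
  · simpa only [h₃] using bddAbove_range_sum_boolSign_mul hw' s
  · simpa only [h₄] using bddAbove_range_sum_boolSign_mul hw' s'
  · rw [← mul_sub, ← mul_sub, abs_mul, abs_boolSign, one_mul]
    exact (le_abs_self _).trans (by rw [abs_mul, abs_boolSign, one_mul]; exact hwv θ₁ θ₂)

lemma signSupSum_le_update [Nonempty ι] {w : ι → κ → ℝ} {v : ι → ℝ} {C : ℝ}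
    (hw : ∀ θ i, |w θ i| ≤ C) (hv : ∀ θ, |v θ| ≤ C) (j : κ)
    (hwv : ∀ θ₁ θ₂, |w θ₁ j - w θ₂ j| ≤ |v θ₁ - v θ₂|) :
    signSupSum w ≤ signSupSum fun θ => Function.update (w θ) j (v θ) := by
  have hflip : Function.Involutive fun s : κ → Bool => Function.update s j (!s j) :=
    fun s => by simp
  have hsum_flip (F : (κ → Bool) → ℝ) : ∑ s, F (Function.update s j (!s j)) = ∑ s, F s :=
    Equiv.sum_comp hflip.toPerm F
  have hpairs := sum_le_sum fun s (_ : s ∈ univ) => iSup_add_iSup_flip_le_update hw hv j hwv s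
  rw [sum_add_distrib, sum_add_distrib, hsum_flip fun s => ⨆ θ, ∑ i, boolSign (s i) * w θ i,
    hsum_flip fun s => ⨆ θ, ∑ i, boolSign (s i) * Function.update (w θ) j (v θ) i] at hpairs
  unfold signSupSum
  linarith

theorem signSupSum_le_of_abs_sub_le [Nonempty ι] {u v : ι → κ → ℝ} {C : ℝ}
    (hu : ∀ θ i, |u θ i| ≤ C) (hv : ∀ θ i, |v θ i| ≤ C)
    (huv : ∀ θ₁ θ₂ i, |u θ₁ i - u θ₂ i| ≤ |v θ₁ i - v θ₂ i|) :
    signSupSum u ≤ signSupSum v := by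
  have hK (K : Finset κ) : signSupSum u ≤ signSupSum fun θ => K.piecewise (v θ) (u θ) := by
    induction K using Finset.induction_on with
    | empty => simp
    | insert j K hj ih =>
      simp only [Finset.piecewise_insert]
      refine ih.trans (signSupSum_le_update (fun θ i => ?_) (fun θ => hv θ j) j
        fun θ₁ θ₂ => by simpa [hj] using huv θ₁ θ₂ j)
      by_cases hi : i ∈ K <;> simp [hi, hu, hv]
  simpa using hK univ

lemma signSupSum_neg (w : ι → κ → ℝ) : signSupSum (-w) = signSupSum w := by
  have hnot : Function.Involutive fun s : κ → Bool => fun i => !s i := fun s => by simp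
  refine (Equiv.sum_comp hnot.toPerm _).symm.trans (sum_congr rfl fun s _ => ?_)
  simp [boolSign_not]

lemma signSupSum_smul {c : ℝ} (hc : 0 ≤ c) (w : ι → κ → ℝ) :
    signSupSum (c • w) = c * signSupSum w := by
  simp only [signSupSum, mul_sum, Real.mul_iSup_of_nonneg hc]
  congr! 3 with s θ
  simp [mul_left_comm]

lemma signSupSum_add_le [Nonempty ι] {u v : ι → κ → ℝ} {C D : ℝ} (hu : ∀ θ i, |u θ i| ≤ C)
    (hv : ∀ θ i, |v θ i| ≤ D) : signSupSum (u + v) ≤ signSupSum u + signSupSum v := by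
  rw [signSupSum, signSupSum, signSupSum, ← sum_add_distrib]
  refine sum_le_sum fun s _ => ciSup_le fun θ => ?_
  simp only [Pi.add_apply, mul_add, sum_add_distrib]
  exact add_le_add (le_ciSup (bddAbove_range_sum_boolSign_mul hu s) θ)
    (le_ciSup (bddAbove_range_sum_boolSign_mul hv s) θ)

lemma signSupSum_min_le [Nonempty ι] {u v : ι → κ → ℝ} {C : ℝ} (hu : ∀ θ i, |u θ i| ≤ C)
    (hv : ∀ θ i, |v θ i| ≤ C) :
    signSupSum (fun θ i => min (u θ i) (v θ i)) ≤ signSupSum u + signSupSum v := by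
  set m : ι → κ → ℝ := fun θ i => |u θ i - v θ i|
  have hmin : (fun θ i => min (u θ i) (v θ i)) = (2⁻¹ : ℝ) • (u + v) + -((2⁻¹ : ℝ) • m) := by
    ext θ i
    rcases le_total (u θ i) (v θ i) with h | h
    · simp only [Pi.add_apply, Pi.neg_apply, Pi.smul_apply, smul_eq_mul, m, min_eq_left h,
        abs_of_nonpos (sub_nonpos.2 h)]
      ring
    · simp only [Pi.add_apply, Pi.neg_apply, Pi.smul_apply, smul_eq_mul, m, min_eq_right h,
        abs_of_nonneg (sub_nonneg.2 h)]
      ring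
  have hsum : ∀ θ i, |(u + v) θ i| ≤ 2 * C := fun θ i =>
    (abs_add_le _ _).trans (by linarith [hu θ i, hv θ i])
  have hdiff : ∀ θ i, |(u + -v) θ i| ≤ 2 * C := fun θ i =>
    (abs_add_le _ _).trans (by rw [Pi.neg_apply, Pi.neg_apply, abs_neg]; linarith [hu θ i, hv θ i])
  have hm : ∀ θ i, |m θ i| ≤ 2 * C := fun θ i => by
    simpa [m, sub_eq_add_neg, abs_abs] using hdiff θ i
  have hm_le : signSupSum m ≤ signSupSum (u + -v) :=
    signSupSum_le_of_abs_sub_le hm hdiff fun θ₁ θ₂ i => by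
      simpa [m, ← sub_eq_add_neg] using
        abs_abs_sub_abs_le_abs_sub (u θ₁ i - v θ₁ i) (u θ₂ i - v θ₂ i)
  calc signSupSum (fun θ i => min (u θ i) (v θ i))
      ≤ signSupSum ((2⁻¹ : ℝ) • (u + v)) + signSupSum (-((2⁻¹ : ℝ) • m)) := by
        rw [hmin]
        refine signSupSum_add_le (C := C) (D := C) (fun θ i => ?_) fun θ i => ?_
        · simpa [abs_mul] using (by linarith [hsum θ i] : 2⁻¹ * |(u + v) θ i| ≤ C)
        · simpa [abs_mul] using (by linarith [hm θ i] : 2⁻¹ * |m θ i| ≤ C)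
    _ = 2⁻¹ * signSupSum (u + v) + 2⁻¹ * signSupSum m := by
        rw [signSupSum_neg, signSupSum_smul (by norm_num), signSupSum_smul (by norm_num)]
    _ ≤ 2⁻¹ * (signSupSum u + signSupSum v) + 2⁻¹ * (signSupSum u + signSupSum (-v)) := by
        gcongr
        · exact signSupSum_add_le hu hv
        · exact hm_le.trans (signSupSum_add_le hu fun θ i => by simpa using hv θ i)
    _ = signSupSum u + signSupSum v := by rw [signSupSum_neg]; ring

lemma signSupSum_inf'_le [Nonempty ι] {α : Type*} {t : Finset α} (ht : t.Nonempty)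
    {g : α → ι → κ → ℝ} {C : ℝ} (hg : ∀ a θ i, |g a θ i| ≤ C) :
    signSupSum (fun θ i => t.inf' ht fun a => g a θ i) ≤ ∑ a ∈ t, signSupSum (g a) := by
  induction ht using Finset.Nonempty.cons_induction with
  | singleton a => simp
  | cons a t hat ht ih =>
    have hinf : ∀ θ i, |t.inf' ht (fun b => g b θ i)| ≤ C := fun θ i => by
      obtain ⟨b, hb, hb_eq⟩ := exists_mem_eq_inf' ht fun b => g b θ i
      exact hb_eq ▸ hg b θ i
    simp only [inf'_cons ht, sum_cons]
    exact (signSupSum_min_le (hg a) hinf).trans (add_le_add_right ih _)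

lemma signSupSum_iInf_le [Nonempty ι] {α : Type*} [Fintype α] {g : α → ι → κ → ℝ} {C : ℝ}
    (hg : ∀ a θ i, |g a θ i| ≤ C) :
    signSupSum (fun θ i => ⨅ a, g a θ i) ≤ ∑ a, signSupSum (g a) := by
  cases isEmpty_or_nonempty α
  · simp [signSupSum]
  · simpa only [← inf'_univ_eq_ciInf] using signSupSum_inf'_le univ_nonempty hg

end SignSupSum

section Massart

variable {κ : Type*} [Fintype κ] [DecidableEq κ]

lemma sum_exp_sum_boolSign_mul_le (x : κ → ℝ) :
    ∑ s : κ → Bool, exp (∑ i, boolSign (s i) * x i) ≤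
      2 ^ Fintype.card κ * exp ((∑ i, x i ^ 2) / 2) :=
  calc ∑ s : κ → Bool, exp (∑ i, boolSign (s i) * x i)
      = ∏ i, ∑ b, exp (boolSign b * x i) := by simp only [Fintype.prod_sum, exp_sum]
    _ = ∏ i, 2 * cosh (x i) := by simp [boolSign, cosh_eq, mul_div_cancel₀]
    _ ≤ ∏ i, 2 * exp (x i ^ 2 / 2) :=
        prod_le_prod (fun i _ => by positivity) fun i _ => by gcongr; exact cosh_le_exp_half_sq _
    _ = 2 ^ Fintype.card κ * exp ((∑ i, x i ^ 2) / 2) := by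
        rw [prod_mul_distrib, prod_const, ← exp_sum, sum_div, card_univ]

lemma sum_log_le_card_mul_log {S : Type*} [Fintype S] {f : S → ℝ} {M : ℝ} (hf : ∀ s, 0 < f s)
    (hM : 0 < M) (h : ∑ s, f s ≤ Fintype.card S * M) :
    ∑ s, log (f s) ≤ Fintype.card S * log M := by
  have htangent : ∀ s, log (f s) ≤ f s / M - 1 + log M := fun s => by
    have := log_le_sub_one_of_pos (div_pos (hf s) hM)
    rw [log_div (hf s).ne' hM.ne'] at this
    linarith
  calc ∑ s, log (f s) ≤ ∑ s, (f s / M - 1 + log M) := sum_le_sum fun s _ => htangent s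
    _ = (∑ s, f s) / M - Fintype.card S + Fintype.card S * log M := by
        simp [sum_add_distrib, sum_sub_distrib, sum_div, card_univ]
    _ ≤ Fintype.card S * log M := by
        have : (∑ s, f s) / M ≤ Fintype.card S := (div_le_iff₀ hM).2 h
        linarith

lemma pi_norm_le_log_sum_exp_div {D : Type*} [Fintype D] [Nonempty D] (y : D → ℝ) {t : ℝ}
    (ht : 0 < t) : ‖y‖ ≤ log (∑ j, (exp (t * y j) + exp (-(t * y j)))) / t := by
  set Z := ∑ j, (exp (t * y j) + exp (-(t * y j)))
  have hexp_le (j : D) : exp (t * |y j|) ≤ Z := by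
    refine le_trans ?_ (single_le_sum (f := fun j => exp (t * y j) + exp (-(t * y j)))
      (fun j _ => by positivity) (mem_univ j))
    rcases abs_cases (y j) with ⟨h, -⟩ | ⟨h, -⟩ <;> rw [h]
    · exact le_add_of_nonneg_right (exp_pos _).le
    · rw [mul_neg]; exact le_add_of_nonneg_left (exp_pos _).le
  have hZ : 0 < Z := (exp_pos _).trans_le (hexp_le (Classical.arbitrary D))
  have hle (j : D) : |y j| ≤ log Z / t := by
    rw [le_div_iff₀ ht, mul_comm, le_log_iff_exp_le hZ]
    exact hexp_le j
  exact (pi_norm_le_iff_of_nonneg ((abs_nonneg _).trans (hle (Classical.arbitrary D)))).2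
    fun j => (Real.norm_eq_abs _).trans_le (hle j)

lemma sum_norm_sum_boolSign_mul_le {D : Type*} [Fintype D] [Nonempty D] (z : D → κ → ℝ)
    {R t : ℝ} (hz : ∀ j, ∑ i, z j i ^ 2 ≤ R) (ht : 0 < t) :
    ∑ s : κ → Bool, ‖fun j => ∑ i, boolSign (s i) * z j i‖ ≤
      2 ^ Fintype.card κ * ((log (2 * Fintype.card D) + t ^ 2 * R / 2) / t) := by
  set y : (κ → Bool) → D → ℝ := fun s j => ∑ i, boolSign (s i) * z j i
  set Z : (κ → Bool) → ℝ := fun s => ∑ j, (exp (t * y s j) + exp (-(t * y s j)))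
  have hZ_pos (s : κ → Bool) : 0 < Z s :=
    sum_pos (fun j _ => by positivity) univ_nonempty
  have hmgf (c : ℝ) (hc : |c| = 1) (j : D) :
      ∑ s : κ → Bool, exp (c * (t * y s j)) ≤ 2 ^ Fintype.card κ * exp (t ^ 2 * R / 2) := by
    have hsq : ∑ i, (c * t * z j i) ^ 2 = t ^ 2 * ∑ i, z j i ^ 2 := by
      rw [mul_sum]; congr! 1 with i; rw [mul_pow, mul_pow, ← sq_abs c, hc]; ring
    calc ∑ s : κ → Bool, exp (c * (t * y s j))
        = ∑ s : κ → Bool, exp (∑ i, boolSign (s i) * (c * t * z j i)) := by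
          simp only [y, mul_sum]; congr! 3; ring
      _ ≤ 2 ^ Fintype.card κ * exp ((∑ i, (c * t * z j i) ^ 2) / 2) :=
          sum_exp_sum_boolSign_mul_le _
      _ ≤ 2 ^ Fintype.card κ * exp (t ^ 2 * R / 2) := by
          rw [hsq]; gcongr; exact hz j
  have hZ_sum :
      ∑ s, Z s ≤ Fintype.card (κ → Bool) * (2 * Fintype.card D * exp (t ^ 2 * R / 2)) := by
    calc ∑ s, Z s = ∑ j, (∑ s : κ → Bool, exp (1 * (t * y s j)) +
          ∑ s : κ → Bool, exp (-1 * (t * y s j))) := by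
          simp only [Z, one_mul, neg_one_mul]; rw [sum_comm]; simp only [sum_add_distrib]
      _ ≤ ∑ _j : D, 2 * (2 ^ Fintype.card κ * exp (t ^ 2 * R / 2)) :=
          sum_le_sum fun j _ => by linarith [hmgf 1 (by simp) j, hmgf (-1) (by simp) j]
      _ = _ := by simp; ring
  have hlog := sum_log_le_card_mul_log hZ_pos (by positivity) hZ_sum
  rw [log_mul (by positivity) (exp_pos _).ne', log_exp, Fintype.card_fun, Fintype.card_bool] at hlog
  calc ∑ s, ‖y s‖ ≤ ∑ s, log (Z s) / t := sum_le_sum fun s _ => pi_norm_le_log_sum_exp_div _ ht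
    _ = (∑ s, log (Z s)) / t := (sum_div ..).symm
    _ ≤ _ := by rw [mul_div_assoc']; gcongr; exact_mod_cast hlog

end Massart

lemma abs_iInf_le_of_abs_le {α : Type*} [Finite α] {g : α → ℝ} {C : ℝ} (hC : 0 ≤ C)
    (hg : ∀ a, |g a| ≤ C) : |⨅ a, g a| ≤ C := by
  cases isEmpty_or_nonempty α
  · simpa [Real.iInf_of_isEmpty] using hC
  · obtain ⟨a, ha⟩ := exists_eq_ciInf_of_finite (f := g)
    exact ha ▸ hg a

section L1Ball

def l1Ball (D : Type*) [Fintype D] (B : ℝ) : Set (D → ℝ) := {θ | ∑ j, |θ j| ≤ B}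

variable {κ D : Type*} [Fintype κ] [DecidableEq κ] [Fintype D] {B : ℝ}

lemma zero_mem_l1Ball (hB : 0 ≤ B) : (0 : D → ℝ) ∈ l1Ball D B := by simpa [l1Ball] using hB

lemma abs_sum_mul_le_of_mem_l1Ball {θ : D → ℝ} (hθ : θ ∈ l1Ball D B) (y : D → ℝ) :
    |∑ j, θ j * y j| ≤ B * ‖y‖ :=
  calc |∑ j, θ j * y j| ≤ ∑ j, |θ j| * ‖y‖ :=
        (abs_sum_le_sum_abs _ _).trans <| sum_le_sum fun j _ => by
          rw [abs_mul]; gcongr; exact norm_le_pi_norm y j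
    _ = (∑ j, |θ j|) * ‖y‖ := (sum_mul ..).symm
    _ ≤ B * ‖y‖ := by gcongr; exact hθ

lemma sum_norm_sum_boolSign_mul_le_sqrt (c : κ → D → ℝ) (hc : ∀ i j, |c i j| ≤ 1) :
    ∑ s : κ → Bool, ‖fun j => ∑ i, boolSign (s i) * c i j‖ ≤
      2 ^ Fintype.card κ * √(2 * Fintype.card κ * log (2 * Fintype.card D)) := by
  rcases isEmpty_or_nonempty D with hD | hD
  · simp [Subsingleton.elim _ (0 : D → ℝ)]
  rcases (Fintype.card κ).eq_zero_or_pos with hκ | hκ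
  · have : IsEmpty κ := Fintype.card_eq_zero_iff.1 hκ
    simp
  set n : ℝ := (Fintype.card κ : ℝ)
  set L := log (2 * Fintype.card D)
  have hn : 0 < n := by positivity
  have hL : 0 < L := log_pos (by have := Fintype.card_pos (α := D); norm_cast; omega)
  set r := √(2 * n * L)
  have hr : 0 < r := sqrt_pos.2 (by positivity)
  have hr_sq : r ^ 2 = 2 * n * L := sq_sqrt (by positivity)
  have hz : ∀ j, ∑ i, c i j ^ 2 ≤ n := fun j =>
    (sum_le_sum fun i _ => (sq_le_one_iff_abs_le_one _).2 (hc i j)).trans (by simp [n])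
  -- `t = r / n` minimizes `(L + t ^ 2 * n / 2) / t`
  refine (sum_norm_sum_boolSign_mul_le (fun j i => c i j) hz (div_pos hr hn)).trans_eq ?_
  congr 1
  field_simp
  rw [hr_sq]
  ring

lemma signSupSum_l1Ball_le (hB : 0 ≤ B) (c : κ → D → ℝ) (hc : ∀ i j, |c i j| ≤ 1) :
    signSupSum (fun (θ : l1Ball D B) i => ∑ j, c i j * θ.1 j) ≤
      2 ^ Fintype.card κ * (B * √(2 * Fintype.card κ * log (2 * Fintype.card D))) := by
  have : Nonempty (l1Ball D B) := ⟨⟨0, zero_mem_l1Ball hB⟩⟩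
  have hdual (s : κ → Bool) : ⨆ θ : l1Ball D B, ∑ i, boolSign (s i) * ∑ j, c i j * θ.1 j ≤
      B * ‖fun j => ∑ i, boolSign (s i) * c i j‖ := ciSup_le fun θ => by
    have hswap : ∑ i, boolSign (s i) * ∑ j, c i j * θ.1 j =
        ∑ j, θ.1 j * ∑ i, boolSign (s i) * c i j := by
      simp only [mul_sum]; rw [sum_comm]; congr! 2; ring
    exact hswap ▸ (le_abs_self _).trans (abs_sum_mul_le_of_mem_l1Ball θ.2 _)
  calc signSupSum (fun (θ : l1Ball D B) i => ∑ j, c i j * θ.1 j)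
      ≤ ∑ s : κ → Bool, B * ‖fun j => ∑ i, boolSign (s i) * c i j‖ := sum_le_sum fun s _ => hdual s
    _ ≤ _ := by
      rw [← mul_sum, mul_left_comm]
      gcongr
      exact sum_norm_sum_boolSign_mul_le_sqrt c hc

lemma signSupSum_min_zero_iInf_le {α : Type*} [Fintype α] (hB : 0 ≤ B) (X : κ → α → D → ℝ)
    (hX : ∀ i a j, |X i a j| ≤ 1) :
    signSupSum (fun (θ : l1Ball D B) i => min 0 (⨅ a, ∑ j, X i a j * θ.1 j)) ≤ Fintype.card α *
      (2 ^ Fintype.card κ * (B * √(2 * Fintype.card κ * log (2 * Fintype.card D)))) := by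
  have : Nonempty (l1Ball D B) := ⟨⟨0, zero_mem_l1Ball hB⟩⟩
  set lin : α → l1Ball D B → κ → ℝ := fun a θ i => ∑ j, X i a j * θ.1 j
  have hlin (a θ i) : |lin a θ i| ≤ B := by
    have hX' : ‖X i a‖ ≤ 1 := (pi_norm_le_iff_of_nonneg zero_le_one).2 (hX i a)
    simpa only [lin, mul_comm] using
      (abs_sum_mul_le_of_mem_l1Ball θ.2 _).trans (mul_le_of_le_one_right hB hX')
  have hinf (θ i) : |⨅ a, lin a θ i| ≤ B := abs_iInf_le_of_abs_le hB fun a => hlin a θ i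
  have hclip (θ i) : |min 0 (⨅ a, lin a θ i)| ≤ B := by
    obtain ⟨h₁, h₂⟩ := abs_le.1 (hinf θ i)
    exact abs_le.2 ⟨le_min (by linarith) h₁, (min_le_left _ _).trans hB⟩
  calc signSupSum (fun θ i => min 0 (⨅ a, lin a θ i))
      ≤ signSupSum fun θ i => ⨅ a, lin a θ i :=
        signSupSum_le_of_abs_sub_le hclip hinf fun θ₁ θ₂ i => by
          simpa using abs_min_sub_min_le_max 0 (⨅ a, lin a θ₁ i) 0 (⨅ a, lin a θ₂ i)
    _ ≤ ∑ a, signSupSum (lin a) := signSupSum_iInf_le hlin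
    _ ≤ ∑ _a : α, 2 ^ Fintype.card κ * (B * √(2 * Fintype.card κ * log (2 * Fintype.card D))) :=
        sum_le_sum fun a _ => signSupSum_l1Ball_le hB (fun i j => X i a j) fun i j => hX i a j
    _ = _ := by simp

end L1Ball

lemma iSup_minLinClass (d A : ℕ) (B : ℝ) (g : (MatBall d A → ℝ) → ℝ) :
    ⨆ f : minLinClass d A B, g f =
      ⨆ θ : l1Ball (Fin d) B, g fun X => min 0 (⨅ a, ∑ i, X.1 a i * θ.1 i) := by
  have : minLinClass d A B =
      Set.range fun θ : l1Ball (Fin d) B => fun X => min 0 (⨅ a, ∑ i, X.1 a i * θ.1 i) := by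
    ext f
    simp [minLinClass, l1Ball, eq_comm]
  rw [this, iSup, iSup]
  congr 1
  ext
  simp

lemma radComp_minLinClass_le {d A n : ℕ} {B : ℝ} (hB : 0 ≤ B) (x : Fin n → MatBall d A) :
    radComp n (minLinClass d A B) x ≤ A * B * √(2 * log (2 * d) / n) := by
  have hsqrt : (1 / n : ℝ) * √(2 * n * log (2 * d)) = √(2 * log (2 * d) / n) := by
    rcases n.eq_zero_or_pos with rfl | hn
    · simp
    rw [show 2 * log (2 * d) / n = 2 * n * log (2 * d) / (n : ℝ) ^ 2 by field_simp,
      sqrt_div' _ (by positivity), sqrt_sq (by positivity), one_div_mul_eq_div]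
  have hsup (s : Fin n → Bool) : ⨆ f : minLinClass d A B, ∑ i, boolSign (s i) * f.1 (x i) =
      ⨆ θ : l1Ball (Fin d) B, ∑ i, boolSign (s i) * min 0 (⨅ a, ∑ j, (x i).1 a j * θ.1 j) :=
    iSup_minLinClass d A B fun f => ∑ i, boolSign (s i) * f (x i)
  rw [radComp, integral_signPi]
  simp only [hsup]
  calc (1 / n : ℝ) * ((2 ^ n)⁻¹ *
        signSupSum fun (θ : l1Ball (Fin d) B) i => min 0 (⨅ a, ∑ j, (x i).1 a j * θ.1 j))
      ≤ (1 / n : ℝ) * ((2 ^ n)⁻¹ * (A * (2 ^ n * (B * √(2 * n * log (2 * d)))))) := by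
        gcongr
        simpa using signSupSum_min_zero_iInf_le hB (fun i => (x i).1) fun i => (x i).2
    _ = A * B * √(2 * log (2 * d) / n) := by rw [← hsqrt]; field_simp

/-- the Rademacher complexity of the class of clipped minima of `A` linear
functionals with a shared ℓ₁-bounded weight vector satisfies
`R_n(ℱ_{d,B}) ≤ A B √(π log(2d)/n)`. -/
theorem stmt_10 (d A n : ℕ) (B : ℝ) (hB : 0 < B) :
    (⨆ x : Fin n → MatBall d A, radComp n (minLinClass d A B) x) ≤
      (A : ℝ) * B * Real.sqrt (Real.pi * Real.log (2 * (d : ℝ)) / (n : ℝ)) := by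
  refine Real.iSup_le (fun x => (radComp_minLinClass_le hB.le x).trans ?_) (by positivity)
  have hL : 0 ≤ log (2 * d) := by exact_mod_cast log_natCast_nonneg (2 * d)
  gcongr
  exact two_le_pi
end
end
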